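/- arXiv:1607.03018 — 7 statements merged into one kernel-verified Lean document; each statement's English description precedes it below -/
import Mathlib

section
/- For every integer n ≥ 2, the occurrence graph G_{12}(id_n) of the pattern 12 in the identity permutation id_n has exactly n(n-1)(n-2)/2 edges, i.e. 3·C(n,3) edges. -/
open Finset

/-- `s` is an occurrence (index set) of the pattern `p` in the permutation `π`:
`s` has `k` elements and, listed increasingly, `π` on `s` is order isomorphic to `p`. -/
def IsOccurrence {k n : ℕ} (p : Equiv.Perm (Fin k)) (π : Equiv.Perm (Fin n))
    (s : Finset (Fin n)) : Prop :=
  ∃ h : s.card = k, ∀ a b : Fin k,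
    π ↑(s.orderIsoOfFin h a) < π ↑(s.orderIsoOfFin h b) ↔ p a < p b

/-- The occurrence set `V_p(π)` of all occurrence index sets of `p` in `π`. -/
def OccSet {k n : ℕ} (p : Equiv.Perm (Fin k)) (π : Equiv.Perm (Fin n)) :
    Set (Finset (Fin n)) :=
  {s | IsOccurrence p π s}

/-- The occurrence graph `G_p(π)`: vertices are the occurrences of `p` in `π`,
two occurrences adjacent iff they differ in exactly one element. -/
def OccGraph {k n : ℕ} (p : Equiv.Perm (Fin k)) (π : Equiv.Perm (Fin n)) :
    SimpleGraph {s : Finset (Fin n) // IsOccurrence p π s} where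
  Adj u v := (u.val \ v.val).card = 1 ∧ (v.val \ u.val).card = 1
  symm := ⟨fun u v h => ⟨h.2, h.1⟩⟩
  loopless := ⟨fun u h => by simp at h⟩

/-!
Every `k`-subset of `{1,…,n}` is an occurrence of `id_k` in `id_n`, so `G_{12}(id_n)` is the
Johnson graph `J(n, 2)`. A dart of `J(n, 2)` is a pair `({a, b}, {a, c})` with `a, b, c`
distinct, and every triple of distinct elements arises from exactly one dart. Hence there are
`n (n - 1) (n - 2) = 6 C(n, 3)` darts and half as many edges.
-/

def johnsonGraph (α : Type*) [DecidableEq α] (k : ℕ) :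
    SimpleGraph {s : Finset α // #s = k} where
  Adj u v := #(u.val \ v.val) = 1 ∧ #(v.val \ u.val) = 1
  symm := ⟨fun _ _ h => ⟨h.2, h.1⟩⟩
  loopless := ⟨fun _ h => by simp at h⟩

section Johnson

variable {α : Type*} [DecidableEq α]

instance (k : ℕ) : DecidableRel (johnsonGraph α k).Adj :=
  fun _ _ => inferInstanceAs (Decidable (_ ∧ _))

lemma exists_eq_pair_of_card_sdiff_eq_one {u v : Finset α} (hu : #u = 2) (hv : #v = 2)
    (huv : #(u \ v) = 1) (hvu : #(v \ u) = 1) :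
    ∃ a b c : α, b ≠ a ∧ c ≠ a ∧ b ≠ c ∧ u = {a, b} ∧ v = {a, c} := by
  obtain ⟨a, ha⟩ : (u ∩ v).Nonempty := by
    rw [← card_pos]
    have := card_sdiff_add_card_inter u v
    omega
  obtain ⟨hau, hav⟩ := mem_inter.mp ha
  obtain ⟨b, hb⟩ := card_eq_one.mp huv
  obtain ⟨c, hc⟩ := card_eq_one.mp hvu
  obtain ⟨hbu, hbv⟩ := mem_sdiff.mp (hb ▸ mem_singleton_self b)
  obtain ⟨hcv, hcu⟩ := mem_sdiff.mp (hc ▸ mem_singleton_self c)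
  have hba : b ≠ a := fun h => hbv (h ▸ hav)
  have hca : c ≠ a := fun h => hcu (h ▸ hau)
  refine ⟨a, b, c, hba, hca, fun h => hbv (h ▸ hcv), ?_, ?_⟩
  · exact (eq_of_subset_of_card_le (insert_subset hau (singleton_subset_iff.2 hbu))
      (by rw [hu, card_pair hba.symm])).symm
  · exact (eq_of_subset_of_card_le (insert_subset hav (singleton_subset_iff.2 hcv))
      (by rw [hv, card_pair hca.symm])).symm

lemma pair_inter_pair {a b c : α} (hbc : b ≠ c) : ({a, b} ∩ {a, c} : Finset α) = {a} := by
  ext; simp only [mem_inter, mem_insert, mem_singleton]; grind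

lemma pair_sdiff_pair {a b c : α} (hba : b ≠ a) (hbc : b ≠ c) :
    ({a, b} \ {a, c} : Finset α) = {b} := by
  ext; simp only [mem_sdiff, mem_insert, mem_singleton]; grind

def johnsonGraphTwoDart (f : Fin 3 ↪ α) : (johnsonGraph α 2).Dart where
  fst := ⟨{f 0, f 1}, card_pair (f.injective.ne (by decide))⟩
  snd := ⟨{f 0, f 2}, card_pair (f.injective.ne (by decide))⟩
  adj := by
    have h01 : f 0 ≠ f 1 := f.injective.ne (by decide)
    have h02 : f 0 ≠ f 2 := f.injective.ne (by decide)
    have h12 : f 1 ≠ f 2 := f.injective.ne (by decide)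
    refine ⟨?_, ?_⟩
    · simp only [pair_sdiff_pair h01.symm h12, card_singleton]
    · simp only [pair_sdiff_pair h02.symm h12.symm, card_singleton]

lemma johnsonGraphTwoDart_fst_inter_snd (f : Fin 3 ↪ α) :
    (johnsonGraphTwoDart f).fst.val ∩ (johnsonGraphTwoDart f).snd.val = {f 0} :=
  pair_inter_pair (f.injective.ne (by decide))

lemma johnsonGraphTwoDart_fst_sdiff_snd (f : Fin 3 ↪ α) :
    (johnsonGraphTwoDart f).fst.val \ (johnsonGraphTwoDart f).snd.val = {f 1} :=
  pair_sdiff_pair (f.injective.ne (by decide)) (f.injective.ne (by decide))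

lemma johnsonGraphTwoDart_snd_sdiff_fst (f : Fin 3 ↪ α) :
    (johnsonGraphTwoDart f).snd.val \ (johnsonGraphTwoDart f).fst.val = {f 2} :=
  pair_sdiff_pair (f.injective.ne (by decide)) (f.injective.ne (by decide))

lemma johnsonGraphTwoDart_injective : Function.Injective (johnsonGraphTwoDart (α := α)) := by
  intro f g hfg
  have h₀ : ({f 0} : Finset α) = {g 0} := by
    rw [← johnsonGraphTwoDart_fst_inter_snd f, ← johnsonGraphTwoDart_fst_inter_snd g, hfg]
  have h₁ : ({f 1} : Finset α) = {g 1} := by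
    rw [← johnsonGraphTwoDart_fst_sdiff_snd f, ← johnsonGraphTwoDart_fst_sdiff_snd g, hfg]
  have h₂ : ({f 2} : Finset α) = {g 2} := by
    rw [← johnsonGraphTwoDart_snd_sdiff_fst f, ← johnsonGraphTwoDart_snd_sdiff_fst g, hfg]
  ext i
  fin_cases i
  exacts [singleton_injective h₀, singleton_injective h₁, singleton_injective h₂]

lemma johnsonGraphTwoDart_surjective :
    Function.Surjective (johnsonGraphTwoDart (α := α)) := by
  rintro ⟨⟨⟨u, hu⟩, ⟨v, hv⟩⟩, huv, hvu⟩
  obtain ⟨a, b, c, hba, hca, hbc, rfl, rfl⟩ := exists_eq_pair_of_card_sdiff_eq_one hu hv huv hvu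
  refine ⟨⟨![a, b, c], fun i j => ?_⟩, rfl⟩
  fin_cases i <;> fin_cases j <;> simp [hba, hca, hbc, hba.symm, hca.symm, hbc.symm]

lemma card_dart_johnsonGraph_two [Fintype α] :
    Fintype.card (johnsonGraph α 2).Dart = (Fintype.card α).descFactorial 3 := by
  rw [← Fintype.card_of_bijective
    ⟨johnsonGraphTwoDart_injective, johnsonGraphTwoDart_surjective⟩,
    Fintype.card_embedding_eq, Fintype.card_fin]

lemma card_edgeFinset_johnsonGraph_two [Fintype α] :
    #(johnsonGraph α 2).edgeFinset = 3 * (Fintype.card α).choose 3 := by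
  have h := (johnsonGraph α 2).dart_card_eq_twice_card_edges
  rw [card_dart_johnsonGraph_two, Nat.descFactorial_eq_factorial_mul_choose] at h
  simp only [Nat.factorial] at h
  omega

end Johnson

lemma isOccurrence_refl_iff {k n : ℕ} (s : Finset (Fin n)) :
    IsOccurrence (Equiv.refl (Fin k)) (Equiv.refl (Fin n)) s ↔ #s = k :=
  ⟨fun ⟨h, _⟩ => h, fun h => ⟨h, fun a b => by simp⟩⟩

def occGraphReflIsoJohnsonGraph (k n : ℕ) :
    OccGraph (Equiv.refl (Fin k)) (Equiv.refl (Fin n)) ≃g johnsonGraph (Fin n) k where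
  toEquiv := Equiv.subtypeEquivRight isOccurrence_refl_iff
  map_rel_iff' := Iff.rfl

lemma mul_pred_mul_sub_two_div_two (n : ℕ) : n * (n - 1) * (n - 2) / 2 = 3 * n.choose 3 := by
  have h : n * (n - 1) * (n - 2) = Nat.factorial 3 * n.choose 3 := by
    rw [← Nat.descFactorial_eq_factorial_mul_choose, Nat.descFactorial_succ,
      Nat.descFactorial_succ, Nat.descFactorial_one]
    ring
  rw [h]
  simp only [Nat.factorial]
  omega

theorem card_edges_occGraph_id_general (n : ℕ) :
    Nat.card (OccGraph (Equiv.refl (Fin 2)) (Equiv.refl (Fin n))).edgeSet =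
      n * (n - 1) * (n - 2) / 2 ∧
    n * (n - 1) * (n - 2) / 2 = 3 * n.choose 3 := by
  refine ⟨?_, mul_pred_mul_sub_two_div_two n⟩
  rw [mul_pred_mul_sub_two_div_two, Nat.card_congr (occGraphReflIsoJohnsonGraph 2 n).mapEdgeSet,
    Nat.card_eq_fintype_card, ← SimpleGraph.edgeFinset_card, card_edgeFinset_johnsonGraph_two,
    Fintype.card_fin]

theorem card_edges_occGraph_id (n : ℕ) (hn : 2 ≤ n) :
    Nat.card (OccGraph (Equiv.refl (Fin 2)) (Equiv.refl (Fin n))).edgeSet =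
      n * (n - 1) * (n - 2) / 2 ∧
    n * (n - 1) * (n - 2) / 2 = 3 * n.choose 3 :=
  card_edges_occGraph_id_general n
end

section
/- For every integer n > 0 and every integer k > 3, the vertices of any clique of size k in the occurrence graph G_{12}(id_n) of the pattern 12 in the identity permutation id_n (these vertices being 2-element index sets) all share a common index, i.e. there exists ℓ ∈ {1,…,n} contained in every vertex of the clique. -/
open Finset

/-!
Two distinct occurrences of `12` adjacent in the occurrence graph are 2-element sets sharing an
element, so a clique is an intersecting family of 2-sets. An intersecting family of 2-sets with
no common element is forced to be a triangle `{ab, bc, ac}`, so it has at most three members.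
-/

section PairFamilies

variable {α : Type*} [DecidableEq α]

theorem Finset.not_disjoint_pair_left {a b : α} {s : Finset α} :
    ¬Disjoint {a, b} s ↔ a ∈ s ∨ b ∈ s := by
  simp [disjoint_insert_left, or_iff_not_imp_left]

theorem Finset.exists_eq_pair_of_card_eq_two_of_mem {s : Finset α} {x : α} (hs : #s = 2)
    (hx : x ∈ s) : ∃ y, y ≠ x ∧ s = {x, y} := by
  obtain ⟨p, q, hpq, rfl⟩ := card_eq_two.mp hs
  rcases mem_insert.mp hx with rfl | hx
  · exact ⟨q, hpq.symm, rfl⟩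
  · rw [mem_singleton.mp hx]
    exact ⟨p, hpq, pair_comm _ _⟩

theorem Finset.mem_triangle_of_not_disjoint {s : Finset α} {a b c : α} (hs : #s = 2)
    (hab : a ≠ b) (hbc : b ≠ c) (hac : a ≠ c)
    (hsab : ¬Disjoint {a, b} s) (hsbc : ¬Disjoint {b, c} s) (hsac : ¬Disjoint {a, c} s) :
    s ∈ ({{a, b}, {b, c}, {a, c}} : Finset (Finset α)) := by
  obtain ⟨x, y, hxy, rfl⟩ := card_eq_two.mp hs
  simp only [not_disjoint_pair_left, mem_insert, mem_singleton] at hsab hsbc hsac ⊢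
  grind [pair_comm]

theorem Set.Intersecting.exists_forall_mem_of_card_eq_two {F : Finset (Finset α)}
    (hF : (F : Set (Finset α)).Intersecting) (hF₂ : ∀ s ∈ F, #s = 2) (hF₃ : 3 < #F) :
    ∃ x, ∀ s ∈ F, x ∈ s := by
  by_contra! hstar
  obtain ⟨u, hu⟩ : F.Nonempty := card_pos.mp (by omega)
  obtain ⟨a, b, hab, rfl⟩ := card_eq_two.mp (hF₂ u hu)
  obtain ⟨v, hv, hav⟩ := hstar a
  obtain ⟨w, hw, hbw⟩ := hstar b
  have hbv : b ∈ v := (not_disjoint_pair_left.mp (hF hu hv)).resolve_left hav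
  have haw : a ∈ w := (not_disjoint_pair_left.mp (hF hu hw)).resolve_right hbw
  obtain ⟨c, hcb, rfl⟩ := exists_eq_pair_of_card_eq_two_of_mem (hF₂ v hv) hbv
  have hca : c ≠ a := by rintro rfl; simp at hav
  have hcw : c ∈ w := (not_disjoint_pair_left.mp (hF hv hw)).resolve_left hbw
  obtain rfl : w = {a, c} :=
    (Finset.eq_of_subset_of_card_le (Finset.insert_subset haw (Finset.singleton_subset_iff.2 hcw))
      (by rw [hF₂ w hw, card_pair hca.symm])).symm
  have hF_sub : F ⊆ {{a, b}, {b, c}, {a, c}} := fun s hs =>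
    mem_triangle_of_not_disjoint (hF₂ s hs) hab hcb.symm hca.symm (hF hu hs) (hF hv hs) (hF hw hs)
  have : #F ≤ 3 := (Finset.card_le_card hF_sub).trans card_le_three
  omega

end PairFamilies

section OccurrenceGraph

variable {k n : ℕ} {p : Equiv.Perm (Fin k)} {π : Equiv.Perm (Fin n)}

theorem IsOccurrence.card_eq {s : Finset (Fin n)} (hs : IsOccurrence p π s) : #s = k := hs.1

theorem OccGraph.not_disjoint_of_adj (hk : k ≠ 1) {u v : {s // IsOccurrence p π s}}
    (huv : (OccGraph p π).Adj u v) : ¬Disjoint u.val v.val := fun hd => by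
  have := huv.1
  rw [Finset.sdiff_eq_self_iff_disjoint.mpr hd, u.2.card_eq] at this
  exact hk this

theorem OccGraph.intersecting_of_isClique (hk : 2 ≤ k) {t : Finset {s // IsOccurrence p π s}}
    (ht : (OccGraph p π).IsClique t) :
    ((t.map (Function.Embedding.subtype _) : Finset (Finset (Fin n))) :
      Set (Finset (Fin n))).Intersecting := by
  simp only [coe_map, Function.Embedding.coe_subtype]
  rintro _ ⟨u, hu, rfl⟩ _ ⟨v, hv, rfl⟩
  rcases eq_or_ne u v with rfl | huv
  · rw [disjoint_self, bot_eq_empty, ← ne_eq, ← nonempty_iff_ne_empty, ← card_pos, u.2.card_eq]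
    omega
  · exact OccGraph.not_disjoint_of_adj (by omega) (ht hu hv huv)

end OccurrenceGraph

theorem clique_common_index_general (n k : ℕ) (hk : 3 < k)
    (t : Finset {s : Finset (Fin n) //
        IsOccurrence (Equiv.refl (Fin 2)) (Equiv.refl (Fin n)) s})
    (ht : (OccGraph (Equiv.refl (Fin 2)) (Equiv.refl (Fin n))).IsNClique k t) :
    ∃ ℓ : Fin n, ∀ v ∈ t, ℓ ∈ v.val := by
  have hcard : ∀ s ∈ t.map (Function.Embedding.subtype _), #s = 2 := fun s hs => by
    obtain ⟨v, -, rfl⟩ := mem_map.mp hs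
    exact v.2.card_eq
  obtain ⟨ℓ, hℓ⟩ := (OccGraph.intersecting_of_isClique le_rfl ht.isClique)
    |>.exists_forall_mem_of_card_eq_two hcard (by rwa [card_map, ht.card_eq])
  exact ⟨ℓ, fun v hv => hℓ v (mem_map_of_mem _ hv)⟩

theorem clique_common_index (n k : ℕ) (hn : 0 < n) (hk : 3 < k)
    (t : Finset {s : Finset (Fin n) //
        IsOccurrence (Equiv.refl (Fin 2)) (Equiv.refl (Fin n)) s})
    (ht : (OccGraph (Equiv.refl (Fin 2)) (Equiv.refl (Fin n))).IsNClique k t) :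
    ∃ ℓ : Fin n, ∀ v ∈ t, ℓ ∈ v.val :=
  clique_common_index_general n k hk t ht
end

section
/- Let p be a pattern and let π, σ be permutations. For every occurrence of π in σ with index injection j, the induced map Φ_p : V_p(π) → V_p(σ), {i₁,…,i_l} ↦ {j(i₁),…,j(i_l)}, is an injective graph homomorphism from G_p(π) to G_p(σ); that is, Φ_p is injective and whenever u,v are adjacent in G_p(π), the vertices Φ_p(u), Φ_p(v) are adjacent in G_p(σ). Hence G_p(π) is isomorphic to a subgraph of G_p(σ). -/
/-! Since `j` is strictly increasing, listing `s.image j` in increasing order is the same as applying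
`j` to the increasing listing of `s`; as `j` also transports the relative order of values from `π`
to `σ`, the image of an occurrence is an occurrence. Adjacency is preserved because an injective
image keeps the sizes of set differences. -/

open Finset

namespace Finset

theorem orderEmbOfFin_image {α β : Type*} [LinearOrder α] [LinearOrder β] {f : α → β}
    (hf : StrictMono f) (s : Finset α) {k : ℕ} (h : s.card = k) (h' : (s.image f).card = k)
    (i : Fin k) : (s.image f).orderEmbOfFin h' i = f (s.orderEmbOfFin h i) :=
  (congrFun (orderEmbOfFin_unique h' (fun i => mem_image_of_mem f (orderEmbOfFin_mem s h i))
    (hf.comp (s.orderEmbOfFin h).strictMono)) i).symm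

theorem card_image_sdiff_image {α β : Type*} [DecidableEq α] [DecidableEq β] {f : α → β}
    (hf : Function.Injective f) (s t : Finset α) :
    (s.image f \ t.image f).card = (s \ t).card := by
  rw [← image_sdiff _ _ hf, card_image_of_injective _ hf]

end Finset

theorem IsOccurrence.image {k m n : ℕ} {p : Equiv.Perm (Fin k)} {π : Equiv.Perm (Fin m)}
    {σ : Equiv.Perm (Fin n)} {j : Fin m → Fin n} (hj : StrictMono j)
    (hocc : ∀ a b, σ (j a) < σ (j b) ↔ π a < π b) {s : Finset (Fin m)}
    (hs : IsOccurrence p π s) : IsOccurrence p σ (s.image j) := by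
  obtain ⟨hcard, hpattern⟩ := hs
  have hcard' : (s.image j).card = k := by rw [card_image_of_injective _ hj.injective, hcard]
  refine ⟨hcard', fun a b => ?_⟩
  simpa only [coe_orderIsoOfFin_apply, orderEmbOfFin_image hj s hcard hcard', hocc]
    using hpattern a b

theorem occGraph_embeds (l m n : ℕ)
    (p : Equiv.Perm (Fin l)) (π : Equiv.Perm (Fin m)) (σ : Equiv.Perm (Fin n))
    (j : Fin m → Fin n) (hj : StrictMono j)
    (hocc : ∀ a b : Fin m, σ (j a) < σ (j b) ↔ π a < π b) :
    ∃ Φ : {s : Finset (Fin m) // IsOccurrence p π s} →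
          {s : Finset (Fin n) // IsOccurrence p σ s},
      (∀ u, (Φ u).val = u.val.image j) ∧
      Function.Injective Φ ∧
      ∀ u v, (OccGraph p π).Adj u v → (OccGraph p σ).Adj (Φ u) (Φ v) := by
  refine ⟨fun u => ⟨u.val.image j, u.2.image hj hocc⟩, fun u => rfl, ?_, ?_⟩
  · intro u v huv
    exact Subtype.ext (image_injective hj.injective (congrArg Subtype.val huv))
  · rintro u v ⟨huv, hvu⟩
    exact ⟨(card_image_sdiff_image hj.injective _ _).trans huv,
      (card_image_sdiff_image hj.injective _ _).trans hvu⟩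
end

section
/- Let c be a hereditary property of graphs (a property of simple graphs invariant under graph isomorphism and inherited by all subgraphs) and let p be a pattern. Then the set 𝒢_{p,c} = {π : G_p(π) has property c} is a permutation class: if σ ∈ 𝒢_{p,c} and π is contained in σ, then π ∈ 𝒢_{p,c}. Equivalently, there exists a set M of permutations such that 𝒢_{p,c} = Av(M). -/
/-!
An occurrence `e` of `π` in `σ` sends each occurrence `s` of `p` in `π` to the occurrence
`e '' s` of `p` in `σ`; since `e` is injective, this preserves the sizes of `u \ v` and
`v \ u`, so it embeds `G_p(π)` into `G_p(σ)` as an induced subgraph and a hereditary property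
passes down. A containment-closed class is then `Av(M)` for `M` its complement, because
containment is reflexive.
-/

open Finset

/-- `σ` contains the pattern `π` (there is an occurrence of `π` in `σ`,
given by a strictly increasing index injection). -/
def PermContains {m n : ℕ} (σ : Equiv.Perm (Fin n)) (π : Equiv.Perm (Fin m)) : Prop :=
  ∃ j : Fin m → Fin n, StrictMono j ∧ ∀ a b : Fin m, σ (j a) < σ (j b) ↔ π a < π b

theorem Finset.orderEmbOfFin_map {α β : Type*} [LinearOrder α] [LinearOrder β] (e : α ↪o β)
    (s : Finset α) {k : ℕ} (h : s.card = k) (i : Fin k) :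
    (s.map e.toEmbedding).orderEmbOfFin ((card_map _).trans h) i = e (s.orderEmbOfFin h i) := by
  refine congrFun (orderEmbOfFin_unique _ (fun i => ?_) (e.strictMono.comp
    (s.orderEmbOfFin h).strictMono)).symm i
  exact mem_map_of_mem _ (s.orderEmbOfFin_mem h i)

theorem IsOccurrence.map {k m n : ℕ} {p : Equiv.Perm (Fin k)} {π : Equiv.Perm (Fin m)}
    {σ : Equiv.Perm (Fin n)} {s : Finset (Fin m)} (hs : IsOccurrence p π s)
    (e : Fin m ↪o Fin n) (he : ∀ a b, σ (e a) < σ (e b) ↔ π a < π b) :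
    IsOccurrence p σ (s.map e.toEmbedding) := by
  obtain ⟨h, hs⟩ := hs
  refine ⟨(card_map _).trans h, fun a b => ?_⟩
  rw [coe_orderIsoOfFin_apply, coe_orderIsoOfFin_apply, orderEmbOfFin_map, orderEmbOfFin_map, he]
  simpa only [coe_orderIsoOfFin_apply] using hs a b

def OccGraph.embeddingOfOccurrence {k m n : ℕ} (p : Equiv.Perm (Fin k))
    {π : Equiv.Perm (Fin m)} {σ : Equiv.Perm (Fin n)} (e : Fin m ↪o Fin n)
    (he : ∀ a b, σ (e a) < σ (e b) ↔ π a < π b) : OccGraph p π ↪g OccGraph p σ where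
  toFun u := ⟨u.1.map e.toEmbedding, u.2.map e he⟩
  inj' _ _ huv := Subtype.ext (map_injective _ (congrArg Subtype.val huv))
  map_rel_iff' {u v} := by
    change ((u.1.map _) \ (v.1.map _)).card = 1 ∧ ((v.1.map _) \ (u.1.map _)).card = 1 ↔ _
    simp only [← Finset.map_sdiff, card_map]
    rfl

theorem PermContains.nonempty_occGraph_embedding {k m n : ℕ} (p : Equiv.Perm (Fin k))
    {π : Equiv.Perm (Fin m)} {σ : Equiv.Perm (Fin n)} (h : PermContains σ π) :
    Nonempty (OccGraph p π ↪g OccGraph p σ) :=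
  let ⟨j, hj, hjσ⟩ := h
  ⟨OccGraph.embeddingOfOccurrence p (OrderEmbedding.ofStrictMono j hj) hjσ⟩

theorem PermContains.refl {n : ℕ} (σ : Equiv.Perm (Fin n)) : PermContains σ σ :=
  ⟨id, strictMono_id, fun _ _ => Iff.rfl⟩

theorem setOf_eq_avoiders_of_contains_closed (P : (Σ n : ℕ, Equiv.Perm (Fin n)) → Prop)
    (hP : ∀ (m n : ℕ) (π : Equiv.Perm (Fin m)) (σ : Equiv.Perm (Fin n)),
      P ⟨n, σ⟩ → PermContains σ π → P ⟨m, π⟩) :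
    {τ | P τ} =
      {τ : Σ n : ℕ, Equiv.Perm (Fin n) | ∀ q ∈ {q | ¬ P q}, ¬ PermContains τ.2 q.2} := by
  ext ⟨n, τ⟩
  exact ⟨fun hτ q hq hcont => hq (hP _ _ q.2 τ hτ hcont),
    fun h => not_not.1 fun hτ => h ⟨n, τ⟩ hτ (PermContains.refl τ)⟩

theorem hereditary_gives_permutation_class (k : ℕ) (p : Equiv.Perm (Fin k))
    (c : ∀ V : Type, SimpleGraph V → Prop)
    (hc : ∀ (V W : Type) (G : SimpleGraph V) (H : SimpleGraph W) (f : W → V),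
      Function.Injective f → (∀ a b : W, H.Adj a b → G.Adj (f a) (f b)) →
      c V G → c W H) :
    (∀ (m n : ℕ) (π : Equiv.Perm (Fin m)) (σ : Equiv.Perm (Fin n)),
      c {s : Finset (Fin n) // IsOccurrence p σ s} (OccGraph p σ) →
      PermContains σ π →
      c {s : Finset (Fin m) // IsOccurrence p π s} (OccGraph p π)) ∧
    ∃ M : Set (Σ n : ℕ, Equiv.Perm (Fin n)),
      {τ : Σ n : ℕ, Equiv.Perm (Fin n) |
          c {s : Finset (Fin τ.1) // IsOccurrence p τ.2 s} (OccGraph p τ.2)} =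
      {τ : Σ n : ℕ, Equiv.Perm (Fin n) | ∀ q ∈ M, ¬ PermContains τ.2 q.2} := by
  have closed : ∀ (m n : ℕ) (π : Equiv.Perm (Fin m)) (σ : Equiv.Perm (Fin n)),
      c {s : Finset (Fin n) // IsOccurrence p σ s} (OccGraph p σ) →
      PermContains σ π →
      c {s : Finset (Fin m) // IsOccurrence p π s} (OccGraph p π) := by
    intro m n π σ hσ hcont
    obtain ⟨e⟩ := hcont.nonempty_occGraph_embedding p
    exact hc _ _ _ _ e e.injective (fun _ _ => e.map_adj_iff.2) hσ
  exact ⟨closed, _, setOf_eq_avoiders_of_contains_closed _ closed⟩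
end

section
/- If the occurrence graph G_{12}(π) of the pattern 12 in a permutation π contains a simple cycle of length k > 4, then G_{12}(π) also contains a cycle of length 3 (a triangle). -/
open Finset

/-- The graph `G` has a simple cycle of length `k`. -/
def HasCycleLength {V : Type} (G : SimpleGraph V) (k : ℕ) : Prop :=
  ∃ (u : V) (w : G.Walk u u), w.IsCycle ∧ w.length = k

/-!
Occurrences of `12` in `π` are the pairs of points `(i, π i)` that are comparable in the dominance
order, and two occurrences are adjacent iff they share a point. If `G₁₂(π)` has no triangle, no
point lies in three occurrences, so along a `k`-cycle of occurrences the points shared by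
consecutive occurrences form an induced `k`-cycle of the comparability graph. For `k ≥ 5` there is
no such cycle: its rightmost point `h` dominates both of its neighbours `a` and `b`, say with `a`
left of `b`. The next point `c` after `b` lies either below `b`, or right of `a` and, being
incomparable with `a`, below `a`. Either way `h` dominates `c`, a chord of the cycle.
-/

lemma Finset.card_sdiff_eq_one_of_mem_of_mem {α : Type*} [DecidableEq α] {s t : Finset α} {z : α}
    (hs : s.card = 2) (ht : t.card = 2) (hst : s ≠ t) (hzs : z ∈ s) (hzt : z ∈ t) :
    (s \ t).card = 1 := by
  refine le_antisymm ?_ (card_pos.2 (sdiff_nonempty.2 fun hsub => hst ?_))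
  · calc (s \ t).card ≤ (s.erase z).card := card_le_card fun y hy => mem_erase.2
          ⟨fun h => (mem_sdiff.1 hy).2 (h ▸ hzt), (mem_sdiff.1 hy).1⟩
      _ = 1 := by rw [card_erase_of_mem hzs, hs]
  · exact eq_of_subset_of_card_le hsub (by rw [hs, ht])

lemma ZMod.add_natCast_ne_add_natCast {k : ℕ} (i : ZMod k) {a b : ℕ} (hab : a < b) (hb : b < k) :
    i + a ≠ i + b := by
  rw [Ne, add_right_inj, ZMod.natCast_eq_natCast_iff', Nat.mod_eq_of_lt (hab.trans hb),
    Nat.mod_eq_of_lt hb]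
  exact hab.ne

section Graph

variable {V : Type} {G : SimpleGraph V}

lemma hasCycleLength_three_of_adj {a b c : V} (hab : G.Adj a b) (hac : G.Adj a c)
    (hbc : G.Adj b c) : HasCycleLength G 3 := by
  classical
  exact G.is3Clique_iff_exists_cycle_length_three.1 ⟨_, G.is3Clique_triple_iff.2 ⟨hab, hac, hbc⟩⟩

lemma HasCycleLength.exists_injective_zmod {k : ℕ} [NeZero k] (h : HasCycleLength G k) :
    ∃ v : ZMod k → V, Function.Injective v ∧ ∀ i, G.Adj (v i) (v (i + 1)) := by
  obtain ⟨u, w, hw, rfl⟩ := h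
  have hlt (i : ZMod w.length) : i.val < w.length := ZMod.val_lt i
  refine ⟨fun i => w.getVert i.val, fun i j hij => ZMod.val_injective _
    (hw.getVert_injOn' (by simpa using Nat.le_sub_one_of_lt (hlt i))
      (by simpa using Nat.le_sub_one_of_lt (hlt j)) hij), fun i => ?_⟩
  have hsucc : (i + 1).val = (i.val + 1) % w.length := by
    rw [ZMod.val_add, ZMod.val_one_eq_one_mod, Nat.add_mod_mod]
  have hadj := w.adj_getVert_succ (hlt i)
  rcases (show i.val + 1 ≤ w.length from hlt i).lt_or_eq with hi | hi
  · simpa [hsucc, Nat.mod_eq_of_lt hi] using hadj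
  · rw [hi, SimpleGraph.Walk.getVert_length] at hadj
    simpa [hsucc, hi] using hadj

end Graph

def IsInducedCycle {α : Type*} {k : ℕ} (r : α → α → Prop) (x : ZMod k → α) : Prop :=
  (∀ i, r (x i) (x (i + 1))) ∧ ∀ i (d : ℕ), 2 ≤ d → d + 2 ≤ k → ¬ r (x i) (x (i + d))

namespace OccGraph

variable {n : ℕ} {p : Equiv.Perm (Fin 2)} {π : Equiv.Perm (Fin n)}
  {u v w : {s : Finset (Fin n) // IsOccurrence p π s}} {z : Fin n}

lemma adj_of_mem (huv : u ≠ v) (hu : z ∈ u.1) (hv : z ∈ v.1) :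
    (OccGraph p π).Adj u v :=
  have huv' : u.1 ≠ v.1 := Subtype.coe_injective.ne huv
  ⟨card_sdiff_eq_one_of_mem_of_mem u.2.fst v.2.fst huv' hu hv,
    card_sdiff_eq_one_of_mem_of_mem v.2.fst u.2.fst huv'.symm hv hu⟩

lemma exists_mem_of_adj (h : (OccGraph p π).Adj u v) : ∃ z, z ∈ u.1 ∧ z ∈ v.1 := by
  have hcard := card_sdiff_add_card_inter u.1 v.1
  rw [h.1, u.2.fst] at hcard
  obtain ⟨z, hz⟩ := card_pos.1 (by omega : 0 < (u.1 ∩ v.1).card)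
  exact ⟨z, mem_inter.1 hz⟩

lemma hasCycleLength_three_of_mem (huv : u ≠ v) (huw : u ≠ w) (hvw : v ≠ w) (hu : z ∈ u.1)
    (hv : z ∈ v.1) (hw : z ∈ w.1) : HasCycleLength (OccGraph p π) 3 :=
  hasCycleLength_three_of_adj (adj_of_mem huv hu hv) (adj_of_mem huw hu hw)
    (adj_of_mem hvw hv hw)

theorem exists_isInducedCycle_of_not_hasCycleLength_three {k : ℕ} (hk : 3 ≤ k)
    (hT : ¬ HasCycleLength (OccGraph p π) 3)
    {v : ZMod k → {s : Finset (Fin n) // IsOccurrence p π s}} (hv : Function.Injective v)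
    (hadj : ∀ i, (OccGraph p π).Adj (v i) (v (i + 1))) :
    ∃ x : ZMod k → Fin n, IsInducedCycle (fun a b => IsOccurrence p π {a, b}) x := by
  choose x hx using fun i => exists_mem_of_adj (hadj i)
  have no_three (i : ZMod k) {a b c : ℕ} (hab : a < b) (hbc : b < c) (hck : c < k) {z : Fin n}
      (ha : z ∈ (v (i + a)).1) (hb : z ∈ (v (i + b)).1) (hc : z ∈ (v (i + c)).1) : False :=
    hT (hasCycleLength_three_of_mem (hv.ne (i.add_natCast_ne_add_natCast hab (hbc.trans hck)))
      (hv.ne (i.add_natCast_ne_add_natCast (hab.trans hbc) hck))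
      (hv.ne (i.add_natCast_ne_add_natCast hbc hck)) ha hb hc)
  refine ⟨x, fun i => ?_, fun i d hd hdk hocc => ?_⟩
  · have hne : x i ≠ x (i + 1) := fun h => no_three i (a := 0) (b := 1) (c := 2) zero_lt_one
      one_lt_two (by omega) (by simpa using (hx i).1) (by simpa using (hx i).2)
      (by simpa [h, add_assoc, one_add_one_eq_two] using (hx (i + 1)).2)
    have hpair : {x i, x (i + 1)} = (v (i + 1)).1 :=
      eq_of_subset_of_card_le (insert_subset (hx i).2 (singleton_subset_iff.2 (hx (i + 1)).1))
        (by rw [card_pair hne, (v _).2.fst])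
    show IsOccurrence p π _
    exact hpair ▸ (v (i + 1)).2
  · have hd : x (i + d) ∈ (v (i + d)).1 := (hx (i + d)).1
    have hd1 : x (i + d) ∈ (v (i + ((d + 1 : ℕ) : ZMod k))).1 := by
      simpa [add_assoc] using (hx (i + d)).2
    by_cases h0 : (⟨_, hocc⟩ : {s // IsOccurrence p π s}) = v i
    · exact no_three i (a := 0) (by omega) (lt_add_one d) (by omega)
        (by simp [← h0]) hd hd1
    by_cases h1 : (⟨_, hocc⟩ : {s // IsOccurrence p π s}) = v (i + 1)
    · exact no_three i (a := 1) (by omega) (lt_add_one d) (by omega)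
        (by simp [← h1]) hd hd1
    exact hT (hasCycleLength_three_of_mem h0 h1 (hadj i).ne (mem_insert_self _ _) (hx i).1
      (hx i).2)

end OccGraph

section Dominance

variable {n : ℕ} (π : Equiv.Perm (Fin n))

def Dominated (a b : Fin n) : Prop := a < b ∧ π a < π b

def Comparable (a b : Fin n) : Prop := Dominated π a b ∨ Dominated π b a

variable {π}

lemma Comparable.symm {a b : Fin n} (h : Comparable π a b) : Comparable π b a := Or.symm h

lemma Dominated.trans {a b c : Fin n} (hab : Dominated π a b) (hbc : Dominated π b c) :
    Dominated π a c :=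
  ⟨hab.1.trans hbc.1, hab.2.trans hbc.2⟩

lemma Comparable.dominated_of_le {a b : Fin n} (h : Comparable π a b) (hab : a ≤ b) :
    Dominated π a b :=
  h.resolve_right fun hba => hab.not_gt hba.1

lemma dominated_of_comparable_of_not_comparable {a b c h : Fin n} (hah : Dominated π a h)
    (hbh : Dominated π b h) (hbc : Comparable π b c) (hab : a ≤ b) (hch : c ≤ h)
    (hac : ¬ Comparable π a c) : Dominated π c h := by
  rcases hbc with hbc | hcb
  · have hpos : a < c := hab.trans_lt hbc.1
    have hval : π c < π a :=
      lt_of_le_of_ne (not_lt.1 fun h' => hac (Or.inl ⟨hpos, h'⟩)) (π.injective.ne hpos.ne')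
    have hch' : π c < π h := hval.trans hah.2
    exact ⟨lt_of_le_of_ne hch (by rintro rfl; exact hch'.false), hch'⟩
  · exact hcb.trans hbh

lemma isOccurrence_twelve_iff (s : Finset (Fin n)) :
    IsOccurrence (Equiv.refl (Fin 2)) π s ↔
      ∃ h : s.card = 2,
        π (s.min' (card_pos.1 (by omega))) < π (s.max' (card_pos.1 (by omega))) := by
  refine exists_congr fun h => ?_
  have h0 : ((s.orderIsoOfFin h 0 : Fin n)) = s.min' _ := orderEmbOfFin_zero h two_pos
  have h1 : ((s.orderIsoOfFin h 1 : Fin n)) = s.max' _ := orderEmbOfFin_last h two_pos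
  refine ⟨fun H => h0 ▸ h1 ▸ (H 0 1).2 Fin.zero_lt_one, fun H a b => ?_⟩
  fin_cases a <;> fin_cases b <;> simp [h0, h1, H, H.le]

lemma isOccurrence_twelve_pair_iff (a b : Fin n) :
    IsOccurrence (Equiv.refl (Fin 2)) π {a, b} ↔ Comparable π a b := by
  rw [isOccurrence_twelve_iff]
  rcases lt_trichotomy a b with hab | rfl | hab
  · simp [card_pair hab.ne, hab.le, Comparable, Dominated, hab, not_lt_of_gt hab]
  · simp [Comparable, Dominated]
  · simp [card_pair hab.ne', hab.le, Comparable, Dominated, hab, not_lt_of_gt hab]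

end Dominance

theorem not_isInducedCycle_comparable {n k : ℕ} [NeZero k] (π : Equiv.Perm (Fin n))
    (hk : 5 ≤ k) (x : ZMod k → Fin n) : ¬ IsInducedCycle (Comparable π) x := by
  rintro ⟨hadj, hind⟩
  have hdist2 (i : ZMod k) : ¬ Comparable π (x i) (x (i + 2)) := by
    simpa using hind i 2 le_rfl (by omega)
  have hdist3 (i : ZMod k) : ¬ Comparable π (x i) (x (i + 3)) := by
    simpa using hind i 3 (by omega) (by omega)
  obtain ⟨j, -, hj⟩ := exists_max_image univ x univ_nonempty
  have hmax (i : ZMod k) : x i ≤ x j := hj i (mem_univ i)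
  have hprev : Dominated π (x (j - 1)) (x j) :=
    (by simpa using hadj (j - 1) : Comparable π (x (j - 1)) (x j)).dominated_of_le (hmax _)
  have hnext : Dominated π (x (j + 1)) (x j) := (hadj j).symm.dominated_of_le (hmax _)
  rcases le_total (x (j - 1)) (x (j + 1)) with hle | hle
  · have hbc : Comparable π (x (j + 1)) (x (j + 2)) := by convert hadj (j + 1) using 2; ring
    have hac : ¬ Comparable π (x (j - 1)) (x (j + 2)) := by convert hdist3 (j - 1) using 3; ring
    exact hdist2 j (Or.inr
      (dominated_of_comparable_of_not_comparable hprev hnext hbc hle (hmax _) hac))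
  · have hbc : Comparable π (x (j - 1)) (x (j - 2)) := by
      convert (hadj (j - 2)).symm using 2; ring
    have hac : ¬ Comparable π (x (j + 1)) (x (j - 2)) := fun h =>
      hdist3 (j - 2) (by convert h.symm using 2; ring)
    refine hdist2 (j - 2) ?_
    rw [sub_add_cancel]
    exact Or.inl (dominated_of_comparable_of_not_comparable hnext hprev hbc hle (hmax _) hac)

theorem cycle_gt_four_gives_triangle (n k : ℕ) (π : Equiv.Perm (Fin n)) (hk : 4 < k)
    (h : HasCycleLength (OccGraph (Equiv.refl (Fin 2)) π) k) :
    HasCycleLength (OccGraph (Equiv.refl (Fin 2)) π) 3 := by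
  by_contra hT
  have : NeZero k := ⟨by omega⟩
  obtain ⟨v, hv, hadj⟩ := h.exists_injective_zmod
  obtain ⟨x, hx⟩ :=
    OccGraph.exists_isInducedCycle_of_not_hasCycleLength_three (by omega) hT hv hadj
  simp only [isOccurrence_twelve_pair_iff] at hx
  exact not_isInducedCycle_comparable π hk x hx
end

section
/- For every permutation π, the occurrence graph G_{12}(π) of the pattern 12 in π is bipartite if and only if π avoids the three patterns 123, 1432 and 3214; that is, 𝒢_{12,bipartite} = Av(123, 1432, 3214). -/
open Finset

/-- The permutation 1432 (0-indexed values). -/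
def perm1432 : Equiv.Perm (Fin 4) := ⟨![0, 3, 2, 1], ![0, 3, 2, 1], by decide, by decide⟩

/-- The permutation 3214 (0-indexed values). -/
def perm3214 : Equiv.Perm (Fin 4) := ⟨![2, 1, 0, 3], ![2, 1, 0, 3], by decide, by decide⟩

/-- The permutation 2143 (0-indexed values). -/
def perm2143 : Equiv.Perm (Fin 4) := ⟨![1, 0, 3, 2], ![1, 0, 3, 2], by decide, by decide⟩

/-!
The occurrences of 12 are the pairs `{i, j}` with `i < j` and `π i < π j`, and two of them are
adjacent when they share exactly one index. An occurrence `a < b < c (< d)` of 123, 1432 or 3214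
gives the triangle `{ab, ac, bc}`, `{ab, ac, ad}` or `{ad, bd, cd}`.

Conversely, let `π` avoid all three. Adjacent occurrences then share their smaller or their
larger index, since sharing the larger index of one and the smaller of the other is a 123. Colour
`{i, j}` by the parity of `i` plus the number of `k ∈ (i, j)` with `π i < π k`. If `{i, j₁}` and
`{i, j₂}` are occurrences with `j₁ < j₂`, avoiding 123 and 1432 leaves `j₁` as the only such `k`
in `[j₁, j₂)`; if `{i₁, j}` and `{i₂, j}` are occurrences with `i₁ < i₂`, avoiding 123 and 3214
makes every `k ∈ (i₁, i₂)` count for `i₁`, and `i₂` itself does not count. Either way the two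
colours differ by one.
-/

section

variable {m n : ℕ}

theorem permContains_iff_exists_strictMono {σ : Equiv.Perm (Fin n)} {p : Equiv.Perm (Fin m)} :
    PermContains σ p ↔ ∃ j : Fin m → Fin n, StrictMono j ∧ StrictMono (σ ∘ j ∘ p.symm) := by
  constructor
  · rintro ⟨j, hj, hσ⟩
    refine ⟨j, hj, fun x y hxy => (hσ _ _).2 ?_⟩
    simpa using hxy
  · rintro ⟨j, hj, hσ⟩
    refine ⟨j, hj, fun a b => ?_⟩
    simpa using hσ.lt_iff_lt (a := p a) (b := p b)

theorem permContains_refl_three_iff {σ : Equiv.Perm (Fin n)} :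
    PermContains σ (Equiv.refl (Fin 3)) ↔
      ∃ a b c, a < b ∧ b < c ∧ σ a < σ b ∧ σ b < σ c := by
  simp only [permContains_iff_exists_strictMono, Fin.strictMono_iff_lt_succ, Fin.forall_fin_succ,
    IsEmpty.forall_iff]
  constructor
  · rintro ⟨j, hj, hσ⟩
    exact ⟨j 0, j 1, j 2, hj.1, hj.2.1, hσ.1, hσ.2.1⟩
  · rintro ⟨a, b, c, hab, hbc, h1, h2⟩
    exact ⟨![a, b, c], ⟨hab, hbc, trivial⟩, h1, h2, trivial⟩

theorem permContains_perm1432_iff {σ : Equiv.Perm (Fin n)} :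
    PermContains σ perm1432 ↔
      ∃ a b c d, a < b ∧ b < c ∧ c < d ∧ σ a < σ d ∧ σ d < σ c ∧ σ c < σ b := by
  simp only [permContains_iff_exists_strictMono, Fin.strictMono_iff_lt_succ, Fin.forall_fin_succ,
    IsEmpty.forall_iff]
  constructor
  · rintro ⟨j, hj, hσ⟩
    exact ⟨j 0, j 1, j 2, j 3, hj.1, hj.2.1, hj.2.2.1, hσ.1, hσ.2.1, hσ.2.2.1⟩
  · rintro ⟨a, b, c, d, hab, hbc, hcd, h1, h2, h3⟩
    exact ⟨![a, b, c, d], ⟨hab, hbc, hcd, trivial⟩, h1, h2, h3, trivial⟩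

theorem permContains_perm3214_iff {σ : Equiv.Perm (Fin n)} :
    PermContains σ perm3214 ↔
      ∃ a b c d, a < b ∧ b < c ∧ c < d ∧ σ c < σ b ∧ σ b < σ a ∧ σ a < σ d := by
  simp only [permContains_iff_exists_strictMono, Fin.strictMono_iff_lt_succ, Fin.forall_fin_succ,
    IsEmpty.forall_iff]
  constructor
  · rintro ⟨j, hj, hσ⟩
    exact ⟨j 0, j 1, j 2, j 3, hj.1, hj.2.1, hj.2.2.1, hσ.1, hσ.2.1, hσ.2.2.1⟩
  · rintro ⟨a, b, c, d, hab, hbc, hcd, h1, h2, h3⟩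
    exact ⟨![a, b, c, d], ⟨hab, hbc, hcd, trivial⟩, h1, h2, h3, trivial⟩

theorem OccGraph.adj_iff_card_inter {k : ℕ} {p : Equiv.Perm (Fin k)} {π : Equiv.Perm (Fin n)}
    {u v : {s // IsOccurrence p π s}} :
    (OccGraph p π).Adj u v ↔ #(u.val ∩ v.val) + 1 = k := by
  obtain ⟨hu, -⟩ := u.2
  obtain ⟨hv, -⟩ := v.2
  have h₁ := card_sdiff_add_card_inter u.val v.val
  have h₂ := card_sdiff_add_card_inter v.val u.val
  rw [inter_comm] at h₂
  change #(u.val \ v.val) = 1 ∧ #(v.val \ u.val) = 1 ↔ _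
  omega

theorem Finset.coe_orderIsoOfFin_pair {α : Type*} [LinearOrder α] {i j : α} (hij : i < j)
    (h : #{i, j} = 2) (a : Fin 2) : (({i, j} : Finset α).orderIsoOfFin h a : α) = ![i, j] a := by
  rw [coe_orderIsoOfFin_apply, ← orderEmbOfFin_unique h (f := ![i, j])]
  · intro x; fin_cases x <;> simp
  · simpa [Fin.strictMono_iff_lt_succ] using hij

theorem isOccurrence_refl_two_pair {π : Equiv.Perm (Fin n)} {i j : Fin n} (hij : i < j) :
    IsOccurrence (Equiv.refl (Fin 2)) π {i, j} ↔ π i < π j := by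
  have hmono : StrictMono (π ∘ ![i, j]) ↔ π i < π j := by
    simp [Fin.strictMono_iff_lt_succ]
  simp only [IsOccurrence, card_pair hij.ne, exists_true_left, coe_orderIsoOfFin_pair hij,
    Equiv.refl_apply, ← hmono]
  exact ⟨fun h a b hab => (h a b).2 hab, fun h a b => h.lt_iff_lt⟩

theorem isOccurrence_refl_two_iff {π : Equiv.Perm (Fin n)} {s : Finset (Fin n)} :
    IsOccurrence (Equiv.refl (Fin 2)) π s ↔ ∃ i j, i < j ∧ π i < π j ∧ s = {i, j} := by
  constructor
  · intro hs
    obtain ⟨x, y, hxy, rfl⟩ := card_eq_two.1 hs.1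
    rcases hxy.lt_or_gt with h | h
    · exact ⟨x, y, h, (isOccurrence_refl_two_pair h).1 hs, rfl⟩
    · rw [pair_comm] at hs
      exact ⟨y, x, h, (isOccurrence_refl_two_pair h).1 hs, pair_comm _ _⟩
  · rintro ⟨i, j, hij, hπ, rfl⟩
    exact (isOccurrence_refl_two_pair hij).2 hπ

theorem SimpleGraph.not_colorable_two_of_triangle {V : Type*} {G : SimpleGraph V} {u v w : V}
    (huv : G.Adj u v) (hvw : G.Adj v w) (huw : G.Adj u w) : ¬ G.Colorable 2 := by
  rintro ⟨C⟩
  have := C.valid huv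
  have := C.valid hvw
  have := C.valid huw
  omega

theorem OccGraph.not_colorable_two_of_triangle {k : ℕ} {p : Equiv.Perm (Fin k)}
    {π : Equiv.Perm (Fin n)} {s t r : Finset (Fin n)} (hs : IsOccurrence p π s)
    (ht : IsOccurrence p π t) (hr : IsOccurrence p π r) (hst : #(s ∩ t) + 1 = k)
    (htr : #(t ∩ r) + 1 = k) (hsr : #(s ∩ r) + 1 = k) : ¬ (OccGraph p π).Colorable 2 :=
  SimpleGraph.not_colorable_two_of_triangle (u := ⟨s, hs⟩) (v := ⟨t, ht⟩) (w := ⟨r, hr⟩)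
    (OccGraph.adj_iff_card_inter.2 hst) (OccGraph.adj_iff_card_inter.2 htr)
    (OccGraph.adj_iff_card_inter.2 hsr)

section Triangles

variable {π : Equiv.Perm (Fin n)}

theorem OccGraph.not_colorable_two_of_permContains_refl_three
    (h : PermContains π (Equiv.refl (Fin 3))) :
    ¬ (OccGraph (Equiv.refl (Fin 2)) π).Colorable 2 := by
  obtain ⟨a, b, c, hab, hbc, hπab, hπbc⟩ := permContains_refl_three_iff.1 h
  exact OccGraph.not_colorable_two_of_triangle ((isOccurrence_refl_two_pair hab).2 hπab)
    ((isOccurrence_refl_two_pair (hab.trans hbc)).2 (hπab.trans hπbc))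
    ((isOccurrence_refl_two_pair hbc).2 hπbc) (by grind) (by grind) (by grind)

theorem OccGraph.not_colorable_two_of_permContains_perm1432 (h : PermContains π perm1432) :
    ¬ (OccGraph (Equiv.refl (Fin 2)) π).Colorable 2 := by
  obtain ⟨a, b, c, d, hab, hbc, hcd, hπad, hπdc, hπcb⟩ := permContains_perm1432_iff.1 h
  exact OccGraph.not_colorable_two_of_triangle
    ((isOccurrence_refl_two_pair hab).2 ((hπad.trans hπdc).trans hπcb))
    ((isOccurrence_refl_two_pair (hab.trans hbc)).2 (hπad.trans hπdc))
    ((isOccurrence_refl_two_pair ((hab.trans hbc).trans hcd)).2 hπad) (by grind) (by grind)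
    (by grind)

theorem OccGraph.not_colorable_two_of_permContains_perm3214 (h : PermContains π perm3214) :
    ¬ (OccGraph (Equiv.refl (Fin 2)) π).Colorable 2 := by
  obtain ⟨a, b, c, d, hab, hbc, hcd, hπcb, hπba, hπad⟩ := permContains_perm3214_iff.1 h
  exact OccGraph.not_colorable_two_of_triangle
    ((isOccurrence_refl_two_pair ((hab.trans hbc).trans hcd)).2 hπad)
    ((isOccurrence_refl_two_pair (hbc.trans hcd)).2 (hπba.trans hπad))
    ((isOccurrence_refl_two_pair hcd).2 ((hπcb.trans hπba).trans hπad)) (by grind) (by grind)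
    (by grind)

end Triangles

theorem Finset.xor_eq_of_card_pair_inter_pair_eq_one {α : Type*} [DecidableEq α] {i j i' j' : α}
    (h : #(({i, j} : Finset α) ∩ {i', j'}) = 1) (hji' : j ≠ i') (hj'i : j' ≠ i) :
    Xor (i = i') (j = j') := by
  obtain ⟨x, hx⟩ := card_eq_one.1 h
  simp only [Finset.ext_iff, mem_inter, mem_insert, mem_singleton] at hx
  have := hx i
  have := hx j
  have := hx i'
  have := hx j'
  grind

def partnersBetween (π : Equiv.Perm (Fin n)) (i j : Fin n) : Finset (Fin n) :=
  {k ∈ Ioo i j | π i < π k}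

def occParity (π : Equiv.Perm (Fin n)) (i j : Fin n) : ℕ :=
  i + #(partnersBetween π i j)

section Avoiding

variable {π : Equiv.Perm (Fin n)} (h123 : ¬ PermContains π (Equiv.refl (Fin 3)))
include h123

theorem partnersBetween_eq_insert (h1432 : ¬ PermContains π perm1432) {i j₁ j₂ : Fin n}
    (h₁ : i < j₁) (h₂ : j₁ < j₂) (hπ₁ : π i < π j₁) (hπ₂ : π i < π j₂) :
    partnersBetween π i j₂ = insert j₁ (partnersBetween π i j₁) := by
  ext k
  simp only [partnersBetween, mem_insert, mem_filter, mem_Ioo]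
  constructor
  · rintro ⟨⟨hik, hkj₂⟩, hπk⟩
    rcases lt_trichotomy k j₁ with hk | rfl | hk
    · exact Or.inr ⟨⟨hik, hk⟩, hπk⟩
    · exact Or.inl rfl
    · exfalso
      rcases (π.injective.ne hkj₂.ne).lt_or_gt with hkj₂' | hj₂k
      · exact h123 (permContains_refl_three_iff.2 ⟨i, k, j₂, hik, hkj₂, hπk, hkj₂'⟩)
      rcases (π.injective.ne hk.ne).lt_or_gt with hj₁k | hkj₁
      · exact h123 (permContains_refl_three_iff.2 ⟨i, j₁, k, h₁, hk, hπ₁, hj₁k⟩)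
      · exact h1432 (permContains_perm1432_iff.2 ⟨i, j₁, k, j₂, h₁, hk, hkj₂, hπ₂, hj₂k, hkj₁⟩)
  · rintro (rfl | ⟨⟨hik, hkj₁⟩, hπk⟩)
    · exact ⟨⟨h₁, h₂⟩, hπ₁⟩
    · exact ⟨⟨hik, hkj₁.trans h₂⟩, hπk⟩

theorem partnersBetween_eq_union (h3214 : ¬ PermContains π perm3214) {i₁ i₂ j : Fin n}
    (h₁ : i₁ < i₂) (h₂ : i₂ < j) (hπ₁ : π i₁ < π j) (hπ₂ : π i₂ < π j) :
    partnersBetween π i₁ j = Ioo i₁ i₂ ∪ partnersBetween π i₂ j := by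
  have hπ₂₁ : π i₂ < π i₁ := by
    refine (π.injective.ne h₁.ne).lt_or_gt.resolve_left fun hπ₁₂ => h123 ?_
    exact permContains_refl_three_iff.2 ⟨i₁, i₂, j, h₁, h₂, hπ₁₂, hπ₂⟩
  ext k
  simp only [partnersBetween, mem_union, mem_filter, mem_Ioo]
  constructor
  · rintro ⟨⟨hi₁k, hkj⟩, hπk⟩
    rcases lt_trichotomy k i₂ with hk | rfl | hk
    · exact Or.inl ⟨hi₁k, hk⟩
    · exact absurd hπk hπ₂₁.not_gt
    · exact Or.inr ⟨⟨hk, hkj⟩, hπ₂₁.trans hπk⟩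
  · rintro (⟨hi₁k, hki₂⟩ | ⟨⟨hi₂k, hkj⟩, hπk⟩)
    · refine ⟨⟨hi₁k, hki₂.trans h₂⟩, ?_⟩
      refine (π.injective.ne hi₁k.ne).lt_or_gt.resolve_right fun hπki₁ => ?_
      rcases (π.injective.ne hki₂.ne).lt_or_gt with hπki₂ | hπi₂k
      · exact h123 (permContains_refl_three_iff.2 ⟨k, i₂, j, hki₂, h₂, hπki₂, hπ₂⟩)
      · exact h3214 (permContains_perm3214_iff.2 ⟨i₁, k, i₂, j, hi₁k, hki₂, h₂, hπi₂k, hπki₁, hπ₁⟩)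
    · refine ⟨⟨h₁.trans hi₂k, hkj⟩, ?_⟩
      refine (π.injective.ne (h₁.trans hi₂k).ne).lt_or_gt.resolve_right fun hπki₁ => h123 ?_
      exact permContains_refl_three_iff.2 ⟨i₂, k, j, hi₂k, hkj, hπk, hπki₁.trans hπ₁⟩

theorem occParity_eq_add_one_of_right_lt (h1432 : ¬ PermContains π perm1432) {i j₁ j₂ : Fin n}
    (h₁ : i < j₁) (h₂ : j₁ < j₂) (hπ₁ : π i < π j₁) (hπ₂ : π i < π j₂) :
    occParity π i j₂ = occParity π i j₁ + 1 := by
  have hj₁ : j₁ ∉ partnersBetween π i j₁ := by simp [partnersBetween]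
  rw [occParity, occParity, partnersBetween_eq_insert h123 h1432 h₁ h₂ hπ₁ hπ₂,
    card_insert_of_notMem hj₁, add_assoc]

theorem occParity_add_one_eq_of_left_lt (h3214 : ¬ PermContains π perm3214) {i₁ i₂ j : Fin n}
    (h₁ : i₁ < i₂) (h₂ : i₂ < j) (hπ₁ : π i₁ < π j) (hπ₂ : π i₂ < π j) :
    occParity π i₁ j + 1 = occParity π i₂ j := by
  have hdisj : Disjoint (Ioo i₁ i₂) (partnersBetween π i₂ j) := by
    refine disjoint_left.2 fun k hk hk' => ?_
    simp only [partnersBetween, mem_filter, mem_Ioo] at hk hk'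
    exact hk.2.not_gt hk'.1.1
  rw [occParity, occParity, partnersBetween_eq_union h123 h3214 h₁ h₂ hπ₁ hπ₂,
    card_union_of_disjoint hdisj, Fin.card_Ioo]
  have : (i₁ : ℕ) < i₂ := h₁
  omega

theorem occParity_add_one_eq_or_add_one_eq (h1432 : ¬ PermContains π perm1432)
    (h3214 : ¬ PermContains π perm3214) {i j i' j' : Fin n} (hij : i < j) (hπ : π i < π j)
    (hij' : i' < j') (hπ' : π i' < π j') (h : #(({i, j} : Finset (Fin n)) ∩ {i', j'}) = 1) :
    occParity π i j + 1 = occParity π i' j' ∨ occParity π i' j' + 1 = occParity π i j := by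
  have hji' : j ≠ i' := by
    rintro rfl
    exact h123 (permContains_refl_three_iff.2 ⟨i, j, j', hij, hij', hπ, hπ'⟩)
  have hj'i : j' ≠ i := by
    rintro rfl
    exact h123 (permContains_refl_three_iff.2 ⟨i', j', j, hij', hij, hπ', hπ⟩)
  rcases xor_eq_of_card_pair_inter_pair_eq_one h hji' hj'i with ⟨rfl, hjj'⟩ | ⟨rfl, hii'⟩
  · rcases Ne.lt_or_gt hjj' with hlt | hlt
    · exact Or.inl (occParity_eq_add_one_of_right_lt h123 h1432 hij hlt hπ hπ').symm
    · exact Or.inr (occParity_eq_add_one_of_right_lt h123 h1432 hij' hlt hπ' hπ).symm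
  · rcases Ne.lt_or_gt hii' with hlt | hlt
    · exact Or.inl (occParity_add_one_eq_of_left_lt h123 h3214 hlt hij' hπ hπ')
    · exact Or.inr (occParity_add_one_eq_of_left_lt h123 h3214 hlt hij hπ' hπ)

theorem OccGraph.colorable_two_of_not_permContains (h1432 : ¬ PermContains π perm1432)
    (h3214 : ¬ PermContains π perm3214) : (OccGraph (Equiv.refl (Fin 2)) π).Colorable 2 := by
  let color : {s // IsOccurrence (Equiv.refl (Fin 2)) π s} → ZMod 2 := fun u =>
    occParity π (u.1.orderIsoOfFin u.2.1 0) (u.1.orderIsoOfFin u.2.1 1)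
  refine (SimpleGraph.Coloring.mk color ?_).colorable
  rintro ⟨s, hs⟩ ⟨t, ht⟩ hadj
  obtain ⟨i, j, hij, hπ, rfl⟩ := isOccurrence_refl_two_iff.1 hs
  obtain ⟨i', j', hij', hπ', rfl⟩ := isOccurrence_refl_two_iff.1 ht
  have hcard : #(({i, j} : Finset (Fin n)) ∩ {i', j'}) = 1 :=
    Nat.add_right_cancel (OccGraph.adj_iff_card_inter.1 hadj)
  simp only [color, coe_orderIsoOfFin_pair hij, coe_orderIsoOfFin_pair hij']
  rcases occParity_add_one_eq_or_add_one_eq h123 h1432 h3214 hij hπ hij' hπ' hcard with h | h <;>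
    simp [← h]

end Avoiding

end

theorem bipartite_iff_avoids (n : ℕ) (π : Equiv.Perm (Fin n)) :
    (OccGraph (Equiv.refl (Fin 2)) π).Colorable 2 ↔
      (¬ PermContains π (Equiv.refl (Fin 3)) ∧
       ¬ PermContains π perm1432 ∧
       ¬ PermContains π perm3214) := by
  refine ⟨fun h => ⟨?_, ?_, ?_⟩, fun ⟨h123, h1432, h3214⟩ => ?_⟩
  · exact fun h' => OccGraph.not_colorable_two_of_permContains_refl_three h' h
  · exact fun h' => OccGraph.not_colorable_two_of_permContains_perm1432 h' h
  · exact fun h' => OccGraph.not_colorable_two_of_permContains_perm3214 h' h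
  · exact OccGraph.colorable_two_of_not_permContains h123 h1432 h3214
end

section
/- For every permutation π of length n, the occurrence graph G_{12}(π) of the pattern 12 in π is a tree (non-empty, connected and acyclic) if and only if: π contains the pattern 12, π avoids the patterns 123, 1432, 2143 and 3214, and there do not exist indices i₁ < i₂ < i₃ < i₄ in {1,…,n} with π(i₃) < π(i₄) < π(i₁) < π(i₂), such that every index j < i₃ with j ∉ {i₁,i₂} satisfies π(j) > π(i₄) and every index j > i₃ with j ≠ i₄ satisfies π(j) < π(i₄). -/
open Finset

/-- `π` has an occurrence of the mesh pattern `m` of Figure 5: an occurrence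
`i₁ < i₂ < i₃ < i₄` of 3412 such that every other point strictly left of position `i₃`
has value above `π i₄`, and every point strictly right of `i₃` other than `i₄`
has value below `π i₄`. -/
def MeshOccurs {n : ℕ} (π : Equiv.Perm (Fin n)) : Prop :=
  ∃ i₁ i₂ i₃ i₄ : Fin n, i₁ < i₂ ∧ i₂ < i₃ ∧ i₃ < i₄ ∧
    π i₃ < π i₄ ∧ π i₄ < π i₁ ∧ π i₁ < π i₂ ∧
    (∀ j : Fin n, j < i₃ → j ≠ i₁ → j ≠ i₂ → π i₄ < π j) ∧
    (∀ j : Fin n, i₃ < j → j ≠ i₄ → π j < π i₄)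

/-!
Occurrences of 12 are the pairs `i < j` with `π i < π j`, two of them adjacent iff they share
exactly one index. An occurrence of 123, 1432 or 3214 yields a triangle of such pairs and one of
2143 a square, while across a mesh occurrence `i₁ i₂ i₃ i₄` no pair lying left of `i₃` is adjacent
to a pair reaching `i₃`, which separates `{i₁, i₂}` from `{i₃, i₄}`.

Conversely, once 123, 1432, 2143 and 3214 are avoided, two adjacent pairs are consecutive in the
lexicographic order of all occurrences, so the graph embeds in a path and is acyclic. Two pairs in
different components must form a 3412 `a b c d`; if it is not a mesh occurrence, the offending
point `j` either links the two components or gives a 3412 with smaller `c - π d`, so by descent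
the graph is connected.
-/

open SimpleGraph

local notation "G₁₂" => OccGraph (Equiv.refl (Fin 2))

namespace SimpleGraph

variable {V : Type*} {G : SimpleGraph V}

theorem isAcyclic_of_injective_of_adj_not_between {α : Type*} [LinearOrder α] (f : V → α)
    (hf : f.Injective) (h : ∀ ⦃u v⦄, G.Adj u v → ∀ w, ¬ (f u < f w ∧ f w < f v)) :
    G.IsAcyclic := by
  have crosses : ∀ ⦃u v⦄, G.Adj u v → f u < f v → ∀ {x y} (p : G.Walk x y),
      f x ≤ f u → f v ≤ f y → s(u, v) ∈ p.edges := by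
    intro u v huv hlt x y p
    induction p with
    | nil => exact fun hxu hvx => absurd (hvx.trans hxu) hlt.not_ge
    | @cons a c _ hac _ ih =>
      intro hau hvy
      by_cases hcu : f c ≤ f u
      · exact List.mem_cons_of_mem _ (ih hcu hvy)
      push Not at hcu
      obtain rfl : a = u := hf <| hau.antisymm <| not_lt.1 fun hau => h hac u ⟨hau, hcu⟩
      obtain rfl : c = v := hf <| le_antisymm (not_lt.1 fun hvc => h hac v ⟨hlt, hvc⟩)
        (not_lt.1 fun hcv => h huv c ⟨hcu, hcv⟩)
      exact List.mem_cons_self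
  refine isAcyclic_iff_forall_adj_isBridge.2 fun u v huv =>
    isBridge_iff_forall_walk_mem_edges.2 fun p => ?_
  rcases (hf.ne huv.ne).lt_or_gt with hlt | hlt
  · exact crosses huv hlt p le_rfl le_rfl
  · simpa [Sym2.eq_swap] using crosses huv.symm hlt p.reverse le_rfl le_rfl

theorem not_isAcyclic_of_triangle {a b c : V} (hab : G.Adj a b) (hbc : G.Adj b c)
    (hca : G.Adj c a) : ¬ G.IsAcyclic := fun h =>
  h (.cons hab (.cons hbc (.cons hca .nil))) (by
    simp [Walk.cons_isCycle_iff, hab.ne, hbc.ne, hca.ne, hab.ne', hca.ne'])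

theorem not_isAcyclic_of_square {a b c d : V} (hab : G.Adj a b) (hbc : G.Adj b c)
    (hcd : G.Adj c d) (hda : G.Adj d a) (hac : a ≠ c) (hbd : b ≠ d) : ¬ G.IsAcyclic := fun h =>
  h (.cons hab (.cons hbc (.cons hcd (.cons hda .nil)))) (by
    simp [Walk.cons_isCycle_iff, hab.ne, hbc.ne, hcd.ne, hda.ne, hab.ne', hda.ne', hac, hbd,
      hac.symm])

theorem Reachable.of_forall_adj_imp {P : V → Prop} (hP : ∀ ⦃u v⦄, G.Adj u v → P u → P v)
    {u v : V} (h : G.Reachable u v) (hu : P u) : P v := by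
  obtain ⟨p⟩ := h
  induction p with
  | nil => exact hu
  | cons huv _ ih => exact ih (hP huv hu)

end SimpleGraph

theorem Finset.orderIsoOfFin_pair {α : Type*} [LinearOrder α] [DecidableEq α] {a b : α}
    (hab : a < b) (h : ({a, b} : Finset α).card = 2) :
    ({a, b} : Finset α).orderIsoOfFin h = Fin.orderIsoPair a b hab :=
  Subsingleton.elim _ _

section

variable {n : ℕ} {π : Equiv.Perm (Fin n)}

theorem permContains_iff_strictMono {m : ℕ} {σ : Equiv.Perm (Fin n)} {p : Equiv.Perm (Fin m)} :
    PermContains σ p ↔ ∃ f : Fin m → Fin n, StrictMono f ∧ StrictMono (σ ∘ f ∘ p.symm) := by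
  refine exists_congr fun f => and_congr_right fun _ => ⟨fun h a b hab => ?_, fun h a b => ?_⟩
  · simpa using (h (p.symm a) (p.symm b)).2 (by simpa using hab)
  · simpa using h.lt_iff_lt (a := p a) (b := p b)

theorem permContains_12_iff :
    PermContains π (Equiv.refl (Fin 2)) ↔ ∃ i j, i < j ∧ π i < π j := by
  rw [permContains_iff_strictMono]
  constructor
  · rintro ⟨f, hf, hv⟩
    exact ⟨f 0, f 1, hf (by decide), hv (by decide : (0 : Fin 2) < 1)⟩
  · rintro ⟨i, j, hij, hv⟩
    refine ⟨![i, j], by simpa using hij, ?_⟩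
    simpa [Fin.strictMono_iff_lt_succ, Fin.forall_fin_succ] using hv

theorem permContains_123_iff :
    PermContains π (Equiv.refl (Fin 3)) ↔ ∃ i j k, i < j ∧ j < k ∧ π i < π j ∧ π j < π k := by
  rw [permContains_iff_strictMono]
  constructor
  · rintro ⟨f, hf, hv⟩
    exact ⟨f 0, f 1, f 2, hf (by decide), hf (by decide), hv (by decide : (0 : Fin 3) < 1),
      hv (by decide : (1 : Fin 3) < 2)⟩
  · rintro ⟨i, j, k, hij, hjk, hv₁, hv₂⟩
    refine ⟨![i, j, k], by simp [hij, hjk], ?_⟩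
    simpa [Fin.strictMono_iff_lt_succ, Fin.forall_fin_succ] using ⟨hv₁, hv₂⟩

theorem permContains_four_iff {p : Equiv.Perm (Fin 4)} :
    PermContains π p ↔ ∃ i₁ i₂ i₃ i₄, i₁ < i₂ ∧ i₂ < i₃ ∧ i₃ < i₄ ∧
      StrictMono (π ∘ ![i₁, i₂, i₃, i₄] ∘ p.symm) := by
  rw [permContains_iff_strictMono]
  constructor
  · rintro ⟨f, hf, hv⟩
    refine ⟨f 0, f 1, f 2, f 3, hf (by decide), hf (by decide), hf (by decide), ?_⟩
    convert hv
    ext a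
    fin_cases a <;> rfl
  · rintro ⟨i₁, i₂, i₃, i₄, h₁, h₂, h₃, hv⟩
    exact ⟨_, by simp [h₁, h₂, h₃], hv⟩

theorem permContains_1432_iff :
    PermContains π perm1432 ↔ ∃ i₁ i₂ i₃ i₄, i₁ < i₂ ∧ i₂ < i₃ ∧ i₃ < i₄ ∧
      π i₁ < π i₄ ∧ π i₄ < π i₃ ∧ π i₃ < π i₂ := by
  simp [permContains_four_iff, Fin.strictMono_iff_lt_succ, Fin.forall_fin_succ, perm1432]

theorem permContains_2143_iff :
    PermContains π perm2143 ↔ ∃ i₁ i₂ i₃ i₄, i₁ < i₂ ∧ i₂ < i₃ ∧ i₃ < i₄ ∧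
      π i₂ < π i₁ ∧ π i₁ < π i₄ ∧ π i₄ < π i₃ := by
  simp [permContains_four_iff, Fin.strictMono_iff_lt_succ, Fin.forall_fin_succ, perm2143]

theorem permContains_3214_iff :
    PermContains π perm3214 ↔ ∃ i₁ i₂ i₃ i₄, i₁ < i₂ ∧ i₂ < i₃ ∧ i₃ < i₄ ∧
      π i₃ < π i₂ ∧ π i₂ < π i₁ ∧ π i₁ < π i₄ := by
  simp [permContains_four_iff, Fin.strictMono_iff_lt_succ, Fin.forall_fin_succ, perm3214]

theorem apply_lt_apply_of_not_lt {i j : Fin n} (hij : i ≠ j) (h : ¬ π i < π j) : π j < π i :=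
  (not_lt.1 h).lt_of_ne (π.injective.ne hij.symm)

theorem lt_of_avoids123_of_lt_left (h : ¬ PermContains π (Equiv.refl (Fin 3))) {i j k : Fin n}
    (hij : i < j) (hjk : j < k) (hv : π i < π j) : π k < π j :=
  apply_lt_apply_of_not_lt hjk.ne fun h' => h (permContains_123_iff.2 ⟨i, j, k, hij, hjk, hv, h'⟩)

theorem lt_of_avoids123_of_lt_right (h : ¬ PermContains π (Equiv.refl (Fin 3))) {i j k : Fin n}
    (hij : i < j) (hjk : j < k) (hv : π j < π k) : π j < π i :=
  apply_lt_apply_of_not_lt hij.ne fun h' => h (permContains_123_iff.2 ⟨i, j, k, hij, hjk, h', hv⟩)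

theorem not_three_occ12_of_same_fst (h123 : ¬ PermContains π (Equiv.refl (Fin 3)))
    (h1432 : ¬ PermContains π perm1432) {i j k l : Fin n} (hij : i < j) (hjk : j < k)
    (hkl : k < l) : ¬ (π i < π j ∧ π i < π k ∧ π i < π l) := fun ⟨hj, hk, hl⟩ =>
  h1432 <| permContains_1432_iff.2 ⟨i, j, k, l, hij, hjk, hkl, hl,
    lt_of_avoids123_of_lt_left h123 (hij.trans hjk) hkl hk,
    lt_of_avoids123_of_lt_left h123 hij hjk hj⟩

theorem not_lex_between_of_same_snd (h123 : ¬ PermContains π (Equiv.refl (Fin 3)))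
    (h2143 : ¬ PermContains π perm2143) (h3214 : ¬ PermContains π perm3214)
    {s p t x y : Fin n} (hsp : s < p) (hpt : p < t) (hxy : x < y) (hst : π s < π t)
    (hpt' : π p < π t) (hxy' : π x < π y) :
    ¬ (toLex (s, t) < toLex (x, y) ∧ toLex (x, y) < toLex (p, t)) := by
  rintro ⟨h₁, h₂⟩
  rw [Prod.Lex.toLex_lt_toLex] at h₁ h₂
  have hps : π p < π s := lt_of_avoids123_of_lt_right h123 hsp hpt hpt'
  rcases h₁ with hsx | ⟨rfl, hty⟩
  · rcases h₂ with hxp | ⟨rfl, hyt⟩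
    · have hxs : π x < π s := lt_of_avoids123_of_lt_right h123 hsx hxy hxy'
      have hpx : π p < π x := lt_of_avoids123_of_lt_right h123 hxp hpt hpt'
      rcases lt_trichotomy y t with hyt | rfl | hty
      · exact h2143 <| permContains_2143_iff.2 ⟨s, x, y, t, hsx, hxy, hyt, hxs, hst,
          lt_of_avoids123_of_lt_left h123 hxy hyt hxy'⟩
      · exact h3214 <| permContains_3214_iff.2 ⟨s, x, p, y, hsx, hxp, hpt, hpx, hxs, hst⟩
      · exact h2143 <| permContains_2143_iff.2 ⟨x, p, t, y, hxp, hpt, hty, hpx, hxy',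
          lt_of_avoids123_of_lt_left h123 (hsp.trans hpt) hty hst⟩
    · exact h2143 <| permContains_2143_iff.2 ⟨s, x, y, t, hsp, hxy, hyt, hps, hst,
        lt_of_avoids123_of_lt_left h123 hxy hyt hxy'⟩
  · exact h2143 <| permContains_2143_iff.2 ⟨s, p, t, y, hsp, hpt, hty, hps, hxy',
      lt_of_avoids123_of_lt_left h123 (hsp.trans hpt) hty hst⟩

theorem isOccurrence_12_iff {s : Finset (Fin n)} :
    IsOccurrence (Equiv.refl (Fin 2)) π s ↔ ∃ i j, i < j ∧ π i < π j ∧ s = {i, j} := by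
  constructor
  · rintro ⟨h, hp⟩
    obtain ⟨i, j, hij, rfl⟩ : ∃ i j, i < j ∧ s = {i, j} := by
      obtain ⟨x, y, hxy, rfl⟩ := card_eq_two.1 h
      rcases hxy.lt_or_gt with hlt | hlt
      exacts [⟨x, y, hlt, rfl⟩, ⟨y, x, hlt, pair_comm _ _⟩]
    refine ⟨i, j, hij, ?_, rfl⟩
    simpa [orderIsoOfFin_pair hij] using (hp 0 1).2 (by decide)
  · rintro ⟨i, j, hij, hv, rfl⟩
    refine ⟨card_pair hij.ne, fun a b => ?_⟩
    rw [orderIsoOfFin_pair hij]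
    fin_cases a <;> fin_cases b <;> simp [hv, hv.le]

abbrev Occ12 (π : Equiv.Perm (Fin n)) : Type :=
  {s : Finset (Fin n) // IsOccurrence (Equiv.refl (Fin 2)) π s}

namespace Occ12

def mk {i j : Fin n} (hij : i < j) (hv : π i < π j) : Occ12 π :=
  ⟨{i, j}, isOccurrence_12_iff.2 ⟨i, j, hij, hv, rfl⟩⟩

theorem exists_eq_mk (o : Occ12 π) : ∃ i j, ∃ (hij : i < j) (hv : π i < π j), o = mk hij hv := by
  obtain ⟨i, j, hij, hv, h⟩ := isOccurrence_12_iff.1 o.2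
  exact ⟨i, j, hij, hv, Subtype.ext h⟩

def lexPair (o : Occ12 π) : Fin n ×ₗ Fin n :=
  toLex ((o.1.orderIsoOfFin o.2.1 0 : Fin n), (o.1.orderIsoOfFin o.2.1 1 : Fin n))

variable {i j k l : Fin n} {hij : i < j} {hv : π i < π j} {hkl : k < l} {hw : π k < π l}

theorem lexPair_mk : (mk hij hv).lexPair = toLex (i, j) := by
  change toLex (((({i, j} : Finset (Fin n)).orderIsoOfFin (card_pair hij.ne) 0 : Fin n)),
    (({i, j} : Finset (Fin n)).orderIsoOfFin (card_pair hij.ne) 1 : Fin n)) = _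
  rw [orderIsoOfFin_pair hij]
  rfl

theorem lexPair_injective : Function.Injective (lexPair : Occ12 π → Fin n ×ₗ Fin n) := by
  intro u v h
  obtain ⟨i, j, hij, hv, rfl⟩ := u.exists_eq_mk
  obtain ⟨k, l, hkl, hw, rfl⟩ := v.exists_eq_mk
  simp only [lexPair_mk, toLex_inj, Prod.mk.injEq] at h
  obtain ⟨rfl, rfl⟩ := h
  rfl

theorem mk_inj : mk hij hv = mk hkl hw ↔ i = k ∧ j = l := by
  rw [← lexPair_injective.eq_iff, lexPair_mk, lexPair_mk, toLex_inj, Prod.mk.injEq]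

theorem adj_iff {u v : Occ12 π} : (G₁₂ π).Adj u v ↔ u ≠ v ∧ ¬ Disjoint u.1 v.1 := by
  have hu : u.1.card = 2 := u.2.1
  have hv : v.1.card = 2 := v.2.1
  have h₁ := card_sdiff_add_card_inter u.1 v.1
  have h₂ := card_sdiff_add_card_inter v.1 u.1
  have hle := card_le_card (inter_subset_left (s₁ := u.1) (s₂ := v.1))
  rw [inter_comm] at h₂
  have heq : u = v ↔ (u.1 ∩ v.1).card = 2 := by
    refine ⟨by rintro rfl; simpa using hu, fun h => Subtype.ext ?_⟩
    have e₁ : u.1 ∩ v.1 = u.1 := eq_of_subset_of_card_le inter_subset_left (by omega)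
    have e₂ : u.1 ∩ v.1 = v.1 := eq_of_subset_of_card_le inter_subset_right (by omega)
    exact e₁.symm.trans e₂
  rw [Ne, heq, not_disjoint_iff_nonempty_inter, ← card_pos]
  show _ ∧ _ ↔ _
  omega

theorem mk_adj_mk_iff : (G₁₂ π).Adj (mk hij hv) (mk hkl hw) ↔
    (i ≠ k ∨ j ≠ l) ∧ (i = k ∨ i = l ∨ j = k ∨ j = l) := by
  rw [adj_iff, Ne, mk_inj, not_and_or]
  simp only [mk, disjoint_insert_left, disjoint_singleton_left, mem_insert, mem_singleton]
  tauto

theorem mk_adj_mk_of_fst_eq {i j k : Fin n} (hij : i < j) (hik : i < k) (hv : π i < π j)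
    (hw : π i < π k) (hjk : j ≠ k) : (G₁₂ π).Adj (mk hij hv) (mk hik hw) :=
  mk_adj_mk_iff.2 ⟨.inr hjk, .inl rfl⟩

theorem mk_adj_mk_of_snd_eq {i j k : Fin n} (hik : i < k) (hjk : j < k) (hv : π i < π k)
    (hw : π j < π k) (hij : i ≠ j) : (G₁₂ π).Adj (mk hik hv) (mk hjk hw) :=
  mk_adj_mk_iff.2 ⟨.inl hij, .inr (.inr (.inr rfl))⟩

theorem mk_adj_mk_of_snd_eq_fst {i j k : Fin n} (hij : i < j) (hjk : j < k) (hv : π i < π j)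
    (hw : π j < π k) : (G₁₂ π).Adj (mk hij hv) (mk hjk hw) :=
  mk_adj_mk_iff.2 ⟨.inl hij.ne, .inr (.inr (.inl rfl))⟩

theorem reachable_of_not_disjoint {u v : Occ12 π} (h : ¬ Disjoint u.1 v.1) :
    (G₁₂ π).Reachable u v := by
  by_cases huv : u = v
  · exact huv ▸ .refl u
  · exact (adj_iff.2 ⟨huv, h⟩).reachable

theorem pairwise_ne_of_not_reachable (h : ¬ (G₁₂ π).Reachable (mk hij hv) (mk hkl hw)) :
    i ≠ k ∧ i ≠ l ∧ j ≠ k ∧ j ≠ l := by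
  obtain ⟨⟨hki, hkj⟩, hli, hlj⟩ : (k ≠ i ∧ k ≠ j) ∧ l ≠ i ∧ l ≠ j := by
    simpa [mk] using not_imp_comm.1 reachable_of_not_disjoint h
  exact ⟨hki.symm, hli.symm, hkj.symm, hlj.symm⟩

theorem not_lexPair_between_of_adj (h123 : ¬ PermContains π (Equiv.refl (Fin 3)))
    (h1432 : ¬ PermContains π perm1432) (h2143 : ¬ PermContains π perm2143)
    (h3214 : ¬ PermContains π perm3214) {u v : Occ12 π} (huv : (G₁₂ π).Adj u v)
    (w : Occ12 π) : ¬ (u.lexPair < w.lexPair ∧ w.lexPair < v.lexPair) := by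
  rintro ⟨h₁, h₂⟩
  obtain ⟨s, t, hst, hst', rfl⟩ := u.exists_eq_mk
  obtain ⟨p, q, hpq, hpq', rfl⟩ := v.exists_eq_mk
  obtain ⟨x, y, hxy, hxy', rfl⟩ := w.exists_eq_mk
  simp only [lexPair_mk] at h₁ h₂
  have lex₁ : s < x ∨ s = x ∧ t < y := Prod.Lex.toLex_lt_toLex.1 h₁
  have lex₂ : x < p ∨ x = p ∧ y < q := Prod.Lex.toLex_lt_toLex.1 h₂
  rcases (mk_adj_mk_iff.1 huv).2 with rfl | rfl | rfl | rfl
  · obtain ⟨rfl, hty, hyq⟩ : s = x ∧ t < y ∧ y < q := by omega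
    exact not_three_occ12_of_same_fst h123 h1432 hst hty hyq ⟨hst', hxy', hpq'⟩
  · omega
  · exact h123 <| permContains_123_iff.2 ⟨s, t, q, hst, hpq, hst', hpq'⟩
  · exact not_lex_between_of_same_snd h123 h2143 h3214 (by omega) hpq hxy hst' hpq' hxy' ⟨h₁, h₂⟩

section Reachability

variable {a b : Fin n} {hab : a < b} {hab' : π a < π b}

theorem lt_and_lt_of_not_reachable {c d : Fin n} {hcd : c < d} {hcd' : π c < π d}
    (h123 : ¬ PermContains π (Equiv.refl (Fin 3))) (h2143 : ¬ PermContains π perm2143) (hac : a < c)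
    (hnr : ¬ (G₁₂ π).Reachable (mk hab hab') (mk hcd hcd')) : b < c ∧ π d < π a := by
  obtain ⟨-, -, hbc, hbd⟩ := pairwise_ne_of_not_reachable hnr
  rcases hbc.lt_or_gt with hbc | hcb
  · refine ⟨hbc, apply_lt_apply_of_not_lt (hac.trans hcd).ne fun had => hnr ?_⟩
    exact (mk_adj_mk_of_fst_eq hab (hac.trans hcd) hab' had hbd).reachable.trans
      (mk_adj_mk_of_snd_eq (hac.trans hcd) hcd had hcd' hac.ne).reachable
  exfalso
  rcases hbd.lt_or_gt with hbd | hdb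
  · have hbc : π b < π c := apply_lt_apply_of_not_lt hcb.ne fun hcb' => hnr <|
      (mk_adj_mk_of_snd_eq hab hcb hab' hcb' hac.ne).reachable.trans
        (mk_adj_mk_of_fst_eq hcb hcd hcb' hcd' hbd.ne).reachable
    exact h123 <| permContains_123_iff.2 ⟨a, b, d, hab, hbd, hab', hbc.trans hcd'⟩
  · exact h2143 <| permContains_2143_iff.2 ⟨a, c, d, b, hac, hcd, hdb,
      lt_of_avoids123_of_lt_right h123 hac hcd hcd', hab',
      lt_of_avoids123_of_lt_left h123 hcd hdb hcd'⟩

theorem reachable_of_3412 {c d : Fin n} {hcd : c < d} {hcd' : π c < π d}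
    (h123 : ¬ PermContains π (Equiv.refl (Fin 3))) (hmesh : ¬ MeshOccurs π) (hbc : b < c)
    (hda : π d < π a) :
    (G₁₂ π).Reachable (mk hab hab') (mk hcd hcd') := by
  by_contra hnr
  refine hmesh ⟨a, b, c, d, hab, hbc, hcd, hcd', hda, hab', fun j hjc hja hjb => ?_,
    fun j hcj hjd => ?_⟩
  · refine apply_lt_apply_of_not_lt (hjc.trans hcd).ne fun hjd => ?_
    have hnr' : ¬ (G₁₂ π).Reachable (mk hab hab') (mk (hjc.trans hcd) hjd) := fun h =>
      hnr (h.trans (mk_adj_mk_of_snd_eq (hjc.trans hcd) hcd hjd hcd' hjc.ne).reachable)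
    rcases lt_or_gt_of_ne hja with hja | haj
    · exact (lt_of_avoids123_of_lt_right h123 hja hab hab').not_gt (hjd.trans hda)
    rcases lt_or_gt_of_ne hjb with hjb | hbj
    · have hja' : π j < π a := apply_lt_apply_of_not_lt haj.ne fun haj' =>
        (lt_of_avoids123_of_lt_left h123 haj hjb haj').not_gt ((hjd.trans hda).trans hab')
      exact hnr' <| (mk_adj_mk_of_snd_eq hab hjb hab' (hja'.trans hab') haj.ne).reachable.trans
        (mk_adj_mk_of_fst_eq hjb (hjc.trans hcd) _ hjd (hbc.trans hcd).ne).reachable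
    · exact hnr' (reachable_of_3412 h123 hmesh hbj hda)
  · refine apply_lt_apply_of_not_lt hjd.symm fun hdj => ?_
    have hnr' : ¬ (G₁₂ π).Reachable (mk hab hab') (mk hcj (hcd'.trans hdj)) := fun h =>
      hnr (h.trans (mk_adj_mk_of_fst_eq hcd hcj hcd' _ hjd.symm).symm.reachable)
    rcases lt_or_gt_of_ne (π.injective.ne (hab.trans (hbc.trans hcj)).ne') with hja | haj
    · exact hnr' (reachable_of_3412 h123 hmesh hbc hja)
    · exact hnr' <| (mk_adj_mk_of_fst_eq hab (hab.trans (hbc.trans hcj)) hab' haj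
        (hbc.trans hcj).ne).reachable.trans
        (mk_adj_mk_of_snd_eq _ hcj haj _ (hab.trans hbc).ne).reachable
termination_by (c : ℕ) + (n - π d)
decreasing_by all_goals omega

theorem reachable_of_fst_lt {c d : Fin n} {hcd : c < d} {hcd' : π c < π d}
    (h123 : ¬ PermContains π (Equiv.refl (Fin 3))) (h2143 : ¬ PermContains π perm2143)
    (hmesh : ¬ MeshOccurs π) (hac : a < c) :
    (G₁₂ π).Reachable (mk hab hab') (mk hcd hcd') := by
  by_contra hnr
  obtain ⟨hbc, hda⟩ := lt_and_lt_of_not_reachable h123 h2143 hac hnr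
  exact hnr (reachable_of_3412 h123 hmesh hbc hda)

end Reachability

end Occ12

open Occ12

theorem not_permContains_123_of_isAcyclic (h : (G₁₂ π).IsAcyclic) :
    ¬ PermContains π (Equiv.refl (Fin 3)) := by
  rw [permContains_123_iff]
  rintro ⟨i, j, k, hij, hjk, hv₁, hv₂⟩
  exact not_isAcyclic_of_triangle (mk_adj_mk_of_snd_eq_fst hij hjk hv₁ hv₂)
    (mk_adj_mk_of_snd_eq hjk (hij.trans hjk) hv₂ (hv₁.trans hv₂) hij.ne')
    (mk_adj_mk_of_fst_eq (hij.trans hjk) hij (hv₁.trans hv₂) hv₁ hjk.ne') h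

theorem not_permContains_1432_of_isAcyclic (h : (G₁₂ π).IsAcyclic) :
    ¬ PermContains π perm1432 := by
  rw [permContains_1432_iff]
  rintro ⟨i₁, i₂, i₃, i₄, h₁₂, h₂₃, h₃₄, hv₁, hv₂, hv₃⟩
  have h₁₃ := h₁₂.trans h₂₃
  exact not_isAcyclic_of_triangle
    (mk_adj_mk_of_fst_eq h₁₂ h₁₃ ((hv₁.trans hv₂).trans hv₃) (hv₁.trans hv₂) h₂₃.ne)
    (mk_adj_mk_of_fst_eq h₁₃ (h₁₃.trans h₃₄) _ hv₁ h₃₄.ne)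
    (mk_adj_mk_of_fst_eq (h₁₃.trans h₃₄) h₁₂ _ _ (h₂₃.trans h₃₄).ne') h

theorem not_permContains_3214_of_isAcyclic (h : (G₁₂ π).IsAcyclic) :
    ¬ PermContains π perm3214 := by
  rw [permContains_3214_iff]
  rintro ⟨i₁, i₂, i₃, i₄, h₁₂, h₂₃, h₃₄, hv₁, hv₂, hv₃⟩
  have h₂₄ := h₂₃.trans h₃₄
  exact not_isAcyclic_of_triangle
    (mk_adj_mk_of_snd_eq (h₁₂.trans h₂₄) h₂₄ hv₃ (hv₂.trans hv₃) h₁₂.ne)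
    (mk_adj_mk_of_snd_eq h₂₄ h₃₄ _ ((hv₁.trans hv₂).trans hv₃) h₂₃.ne)
    (mk_adj_mk_of_snd_eq h₃₄ (h₁₂.trans h₂₄) _ _ (h₁₂.trans h₂₃).ne') h

theorem not_permContains_2143_of_isAcyclic (h : (G₁₂ π).IsAcyclic) :
    ¬ PermContains π perm2143 := by
  rw [permContains_2143_iff]
  rintro ⟨i₁, i₂, i₃, i₄, h₁₂, h₂₃, h₃₄, hv₁, hv₂, hv₃⟩
  have h₁₃ := h₁₂.trans h₂₃
  have h₂₄ := h₂₃.trans h₃₄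
  have hv₁₃ := hv₂.trans hv₃
  have hv₂₄ := hv₁.trans hv₂
  exact not_isAcyclic_of_square
    (mk_adj_mk_of_fst_eq h₁₃ (h₁₃.trans h₃₄) hv₁₃ hv₂ h₃₄.ne)
    (mk_adj_mk_of_snd_eq (h₁₃.trans h₃₄) h₂₄ hv₂ hv₂₄ h₁₂.ne)
    (mk_adj_mk_of_fst_eq h₂₄ h₂₃ hv₂₄ (hv₁.trans hv₁₃) h₃₄.ne')
    (mk_adj_mk_of_snd_eq h₂₃ h₁₃ _ hv₁₃ h₁₂.ne')
    (fun he => h₁₂.ne (mk_inj.1 he).1) (fun he => h₃₄.ne' (mk_inj.1 he).2) h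

theorem not_connected_of_meshOccurs (h : MeshOccurs π) : ¬ (G₁₂ π).Connected := by
  obtain ⟨i₁, i₂, i₃, i₄, h₁₂, h₂₃, h₃₄, hv₃₄, hv₄₁, hv₁₂, hleft, hright⟩ := h
  have above : ∀ k < i₃, π i₄ < π k := fun k hk => by
    by_cases hk₁ : k = i₁
    · exact hk₁ ▸ hv₄₁
    by_cases hk₂ : k = i₂
    · exact hk₂ ▸ hv₄₁.trans hv₁₂
    exact hleft k hk hk₁ hk₂
  have below : ∀ l, i₃ ≤ l → π l ≤ π i₄ := fun l hl => by
    rcases hl.lt_or_eq with hl | rfl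
    · by_cases hl₄ : l = i₄
      · exact hl₄ ▸ le_rfl
      exact (hright l hl hl₄).le
    · exact hv₃₄.le
  have closed : ∀ ⦃u v : Occ12 π⦄, (G₁₂ π).Adj u v →
      (∀ x ∈ u.1, x < i₃) → ∀ x ∈ v.1, x < i₃ := by
    intro u v huv hu
    obtain ⟨i, j, hij, _, rfl⟩ := u.exists_eq_mk
    obtain ⟨k, l, hkl, hkl', rfl⟩ := v.exists_eq_mk
    simp only [Occ12.mk, mem_insert, mem_singleton, forall_eq_or_imp, forall_eq] at hu ⊢
    have hk : k < i₃ := by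
      rcases (mk_adj_mk_iff.1 huv).2 with rfl | rfl | rfl | rfl
      exacts [hu.1, hkl.trans hu.1, hu.2, hkl.trans hu.2]
    exact ⟨hk, not_le.1 fun hl => (below l hl).not_gt ((above k hk).trans hkl')⟩
  intro hconn
  have hlt := (hconn.preconnected (Occ12.mk h₁₂ hv₁₂) (Occ12.mk h₃₄ hv₃₄)).of_forall_adj_imp closed
    (by simp [Occ12.mk, h₁₂.trans h₂₃, h₂₃])
  exact (hlt i₃ (by simp [Occ12.mk])).false

theorem occGraph_isAcyclic (h123 : ¬ PermContains π (Equiv.refl (Fin 3)))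
    (h1432 : ¬ PermContains π perm1432) (h2143 : ¬ PermContains π perm2143)
    (h3214 : ¬ PermContains π perm3214) : (G₁₂ π).IsAcyclic :=
  isAcyclic_of_injective_of_adj_not_between lexPair lexPair_injective
    fun _ _ => not_lexPair_between_of_adj h123 h1432 h2143 h3214

theorem occGraph_connected (h12 : PermContains π (Equiv.refl (Fin 2)))
    (h123 : ¬ PermContains π (Equiv.refl (Fin 3))) (h2143 : ¬ PermContains π perm2143)
    (hmesh : ¬ MeshOccurs π) : (G₁₂ π).Connected := by
  obtain ⟨i, j, hij, hij'⟩ := permContains_12_iff.1 h12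
  have : Nonempty (Occ12 π) := ⟨.mk hij hij'⟩
  refine .mk fun u v => ?_
  obtain ⟨a, b, hab, hab', rfl⟩ := exists_eq_mk u
  obtain ⟨c, d, hcd, hcd', rfl⟩ := exists_eq_mk v
  rcases lt_trichotomy a c with hac | rfl | hca
  · exact reachable_of_fst_lt h123 h2143 hmesh hac
  · exact reachable_of_not_disjoint <| not_disjoint_iff.2 ⟨a, by simp [Occ12.mk]⟩
  · exact (reachable_of_fst_lt h123 h2143 hmesh hca).symm

end

theorem tree_iff (n : ℕ) (π : Equiv.Perm (Fin n)) :
    (OccGraph (Equiv.refl (Fin 2)) π).IsTree ↔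
      (PermContains π (Equiv.refl (Fin 2)) ∧
       ¬ PermContains π (Equiv.refl (Fin 3)) ∧
       ¬ PermContains π perm1432 ∧
       ¬ PermContains π perm2143 ∧
       ¬ PermContains π perm3214 ∧
       ¬ MeshOccurs π) := by
  rw [SimpleGraph.isTree_iff]
  constructor
  · rintro ⟨hconn, hacyc⟩
    obtain ⟨o⟩ := hconn.nonempty
    obtain ⟨i, j, hij, hv, -⟩ := Occ12.exists_eq_mk o
    exact ⟨permContains_12_iff.2 ⟨i, j, hij, hv⟩, not_permContains_123_of_isAcyclic hacyc,
      not_permContains_1432_of_isAcyclic hacyc, not_permContains_2143_of_isAcyclic hacyc,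
      not_permContains_3214_of_isAcyclic hacyc, fun h => not_connected_of_meshOccurs h hconn⟩
  · rintro ⟨h12, h123, h1432, h2143, h3214, hmesh⟩
    exact ⟨occGraph_connected h12 h123 h2143 hmesh, occGraph_isAcyclic h123 h1432 h2143 h3214⟩
end
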